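/- Density lemma: Let X be a set of binary strings of length k with 3·|X| ≥ 2^k, and let A be a set of binary strings such that there are infinitely many n ≥ k with the property that A represents X at level m for every m with n ≤ m ≤ 2n. Then for every optimal prefix-free decompressor D whose domain is a subset of A, there exists a string p in the domain of D such that either p has a prefix in X or p is a prefix of some element of X. -/

import Mathlib

open scoped Classical

/-- Complexity of `x` with respect to decompressor `D`: length of a shortest
`D`-description of `x`, or `⊤` if none exists. -/
noncomputable def Cpx (D : List Bool →. List Bool) (x : List Bool) : ℕ∞ :=
  sInf {n : ℕ∞ | ∃ y : List Bool, x ∈ D y ∧ (y.length : ℕ∞) = n}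

/-- A set of strings is prefix-free: no element is a proper prefix of another. -/
def PrefixFreeSet (S : Set (List Bool)) : Prop :=
  ∀ p ∈ S, ∀ q ∈ S, p <+: q → p = q

/-- `U` is an optimal plain decompressor. -/
def OptimalPlain (U : List Bool →. List Bool) : Prop :=
  Partrec U ∧ ∀ D : List Bool →. List Bool, Partrec D →
    ∃ c : ℕ, ∀ x : List Bool, Cpx U x ≤ Cpx D x + (c : ℕ∞)

/-- `V` is an optimal prefix-free decompressor. -/
def OptimalPrefix (V : List Bool →. List Bool) : Prop :=
  Partrec V ∧ PrefixFreeSet V.Dom ∧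
    ∀ D : List Bool →. List Bool, Partrec D → PrefixFreeSet D.Dom →
      ∃ c : ℕ, ∀ x : List Bool, Cpx V x ≤ Cpx D x + (c : ℕ∞)

/-- `A` represents `X` at level `m`: the strings of length `m` in `A` are exactly
the strings of length `m` having a prefix in `X`. -/
def RepresentsAt (A X : Set (List Bool)) (m : ℕ) : Prop :=
  {l : List Bool | l.length = m ∧ l ∈ A} =
    {l : List Bool | l.length = m ∧ ∃ x ∈ X, x <+: l}

/-!
Compare `D` with a computable prefix-free code whose codewords for strings of length `ℓ` have
length about `3ℓ / 2`. At least a third of the strings of length `n + 1` have a prefix in `X`,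
which is more than the `2 ^ (n - 1)` strings a prefix-free set of descriptions shorter than `n`
can cover; so one of them, `u`, has only `D`-descriptions of length at least `n`. Optimality of
`D` gives `u` a description `y` of length at most `3n / 2 + O(1) ≤ 2n`. As `y ∈ A` and `A`
represents `X` at every level in `[n, 2n]`, `y` has a prefix in `X`.
-/

open Function Encodable

theorem Computable.partrec_partialInv {α β : Type*} [Primcodable α] [Primcodable β]
    [DecidableEq β] {f : α → β} (hf : Computable f) (hinj : Injective f) :
    Partrec fun b => (partialInv f b : Part α) := by
  let g : β → ℕ → Option α := fun b n =>
    (decode n).bind fun a => if f a = b then some a else none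
  have hg : Computable₂ g :=
    (Computable.option_bind (Computable.decode.comp Computable.snd)
      (Computable.cond (Primrec.eq.decide.to_comp.comp (hf.comp Computable.snd)
        (Computable.fst.comp Computable.fst)) (Computable.option_some.comp Computable.snd)
        (Computable.const none)).to₂).of_eq fun _ => by simp only [g, Bool.cond_decide]
  refine (Partrec.rfindOpt hg).of_eq fun b => Part.ext fun a => ?_
  have hmem : ∀ {a n}, a ∈ g b n ↔ decode n = some a ∧ f a = b := by
    intro a n; simp [g, Option.bind_eq_some_iff]
  rw [Part.mem_ofOption, Option.mem_def, hinj.isPartialInv]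
  constructor
  · intro ha
    obtain ⟨n, hn⟩ := Nat.rfindOpt_spec ha
    exact (hmem.1 hn).2
  · rintro rfl
    obtain ⟨a', ha'⟩ :=
      Part.dom_iff_mem.1 (Nat.rfindOpt_dom.2 ⟨encode a, a, hmem.2 ⟨encodek a, rfl⟩⟩)
    obtain ⟨n, hn⟩ := Nat.rfindOpt_spec ha'
    rwa [hinj (hmem.1 hn).2] at ha'

theorem Primrec.list_replicate {α : Type*} [Primcodable α] :
    Primrec₂ (List.replicate : ℕ → α → List α) :=
  (Primrec.list_map (Primrec.list_range.comp Primrec.fst)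
    (Primrec.snd.comp Primrec.fst).to₂).of_eq fun _ => by simp [List.map_const']

def unaryPrepend (n : ℕ) (s : List Bool) : List Bool := List.replicate n true ++ false :: s

theorem unaryPrepend_prefix_unaryPrepend {a b : ℕ} {s t : List Bool}
    (h : unaryPrepend a s <+: unaryPrepend b t) : a = b ∧ s <+: t := by
  induction a generalizing b with
  | zero => cases b <;> simp_all [unaryPrepend, List.replicate_succ]
  | succ a ih =>
    cases b with
    | zero => simp [unaryPrepend, List.replicate_succ] at h
    | succ b =>
      simp only [unaryPrepend, List.replicate_succ, List.cons_append, List.cons_prefix_cons] at h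
      exact (ih h.2).imp_left (congrArg _)

theorem Primrec.unaryPrepend : Primrec₂ unaryPrepend :=
  (Primrec.list_append.comp (Primrec.list_replicate.comp Primrec.fst (Primrec.const true))
    (Primrec.list_cons.comp (Primrec.const false) Primrec.snd)).to₂

-- Writing `x.length` itself in unary would make codewords longer than `2 * x.length`, too long
-- for the argument; halving it brings them down to about `3 * x.length / 2`.
def halfLengthCode (x : List Bool) : List Bool :=
  unaryPrepend (x.length / 2) (unaryPrepend (x.length % 2) x)

theorem length_halfLengthCode (x : List Bool) :
    (halfLengthCode x).length = x.length + x.length / 2 + x.length % 2 + 2 := by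
  simp [halfLengthCode, unaryPrepend]; omega

theorem eq_of_halfLengthCode_prefix {x y : List Bool} (h : halfLengthCode x <+: halfLengthCode y) :
    x = y := by
  obtain ⟨hdiv, h⟩ := unaryPrepend_prefix_unaryPrepend h
  obtain ⟨hmod, h⟩ := unaryPrepend_prefix_unaryPrepend h
  exact h.eq_of_length (by omega)

theorem Primrec.halfLengthCode : Primrec halfLengthCode :=
  Primrec.unaryPrepend.comp (Primrec.nat_div.comp Primrec.list_length (Primrec.const 2))
    (Primrec.unaryPrepend.comp (Primrec.nat_mod.comp Primrec.list_length (Primrec.const 2))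
      Primrec.id)

theorem cpx_le_length {D : List Bool →. List Bool} {x y : List Bool} (h : x ∈ D y) :
    Cpx D x ≤ y.length :=
  sInf_le ⟨y, h, rfl⟩

theorem exists_mem_length_le_of_cpx_le {D : List Bool →. List Bool} {x : List Bool} {n : ℕ}
    (h : Cpx D x ≤ n) : ∃ y, x ∈ D y ∧ y.length ≤ n := by
  set S := {e : ℕ∞ | ∃ y : List Bool, x ∈ D y ∧ (y.length : ℕ∞) = e}
  rcases S.eq_empty_or_nonempty with hS | hS
  · simp [Cpx, S, hS] at h
  · obtain ⟨y, hy, hlen⟩ := csInf_mem hS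
    exact ⟨y, hy, by exact_mod_cast hlen.trans_le h⟩

theorem ncard_setOf_length_eq (n : ℕ) : {l : List Bool | l.length = n}.ncard = 2 ^ n := by
  rw [← Nat.card_coe_set_eq]
  exact (Nat.card_eq_fintype_card (α := List.Vector Bool n)).trans (by simp)

theorem PrefixFreeSet.ncard_le_two_pow {S : Set (List Bool)} (hS : PrefixFreeSet S) {m : ℕ}
    (hlen : ∀ p ∈ S, p.length ≤ m) : S.ncard ≤ 2 ^ m := by
  let pad (p : List Bool) : List Bool := p ++ List.replicate (m - p.length) false
  have hpad : ∀ p ∈ S, pad p ∈ {l : List Bool | l.length = m} := fun p hp => by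
    simp [pad, hlen p hp]
  have hinj : S.InjOn pad := fun p hp q hq hpq => by
    have hqp : q <+: pad p := hpq ▸ List.prefix_append q _
    rcases List.prefix_or_prefix_of_prefix (List.prefix_append p _) hqp with h | h
    · exact hS p hp q hq h
    · exact (hS q hq p hp h).symm
  simpa [ncard_setOf_length_eq] using
    Set.ncard_le_ncard_of_injOn pad hpad hinj (List.finite_length_eq Bool m)

theorem exists_forall_length_lt_of_two_pow_lt_ncard {D : List Bool →. List Bool}
    (hD : PrefixFreeSet D.Dom) {T : Set (List Bool)} {m : ℕ} (hT : 2 ^ m < T.ncard) :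
    ∃ u ∈ T, ∀ y, u ∈ D y → m < y.length := by
  by_contra! h
  choose! desc hdesc hlen using h
  have hinj : T.InjOn desc := fun u hu v hv huv =>
    Part.mem_unique (hdesc u hu) (huv ▸ hdesc v hv)
  have hdom : desc '' T ⊆ D.Dom := by
    rintro _ ⟨u, hu, rfl⟩
    exact (PFun.mem_dom D _).2 ⟨u, hdesc u hu⟩
  have hpf : PrefixFreeSet (desc '' T) := fun p hp q hq => hD p (hdom hp) q (hdom hq)
  have := hpf.ncard_le_two_pow (m := m) (by rintro _ ⟨u, hu, rfl⟩; exact hlen u hu)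
  rw [hinj.ncard_image] at this
  omega

theorem ncard_setOf_length_eq_and_exists_prefix {X : Set (List Bool)} {k L : ℕ}
    (hX : ∀ x ∈ X, x.length = k) (hkL : k ≤ L) :
    {l : List Bool | l.length = L ∧ ∃ x ∈ X, x <+: l}.ncard = X.ncard * 2 ^ (L - k) := by
  have himage : {l : List Bool | l.length = L ∧ ∃ x ∈ X, x <+: l} =
      (fun p : List Bool × List Bool => p.1 ++ p.2) '' X ×ˢ {s | s.length = L - k} := by
    ext l
    constructor
    · rintro ⟨hl, x, hx, s, rfl⟩
      exact ⟨(x, s), ⟨hx, by simp [hX x hx] at hl ⊢; omega⟩, rfl⟩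
    · rintro ⟨⟨x, s⟩, ⟨hx, hs⟩, rfl⟩
      exact ⟨by simp_all, x, hx, List.prefix_append x s⟩
  have hinj : (X ×ˢ {s : List Bool | s.length = L - k}).InjOn
      (fun p : List Bool × List Bool => p.1 ++ p.2) := by
    rintro ⟨x, s⟩ ⟨hx, -⟩ ⟨x', s'⟩ ⟨hx', -⟩ h
    obtain ⟨rfl, rfl⟩ := List.append_inj h ((hX x hx).trans (hX x' hx').symm)
    rfl
  rw [himage, hinj.ncard_image, Set.ncard_prod, ncard_setOf_length_eq]

theorem RepresentsAt.exists_prefix {A X : Set (List Bool)} {m : ℕ} (h : RepresentsAt A X m)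
    {y : List Bool} (hy : y ∈ A) (hlen : y.length = m) : ∃ x ∈ X, x <+: y := by
  have : y ∈ {l : List Bool | l.length = m ∧ l ∈ A} := ⟨hlen, hy⟩
  rw [h] at this
  exact this.2

theorem exists_prefixFree_decompressor_cpx_le :
    ∃ V : List Bool →. List Bool, Partrec V ∧ PrefixFreeSet V.Dom ∧
      ∀ x, Cpx V x ≤ ↑(x.length + x.length / 2 + 3) := by
  have hinj : Injective halfLengthCode := fun x y h =>
    eq_of_halfLengthCode_prefix (h ▸ List.prefix_refl _)
  have hmem : ∀ x y, x ∈ (partialInv halfLengthCode y : Part (List Bool)) ↔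
      halfLengthCode x = y := fun x y => by
    rw [Part.mem_ofOption, Option.mem_def, hinj.isPartialInv]
  refine ⟨fun y => partialInv halfLengthCode y,
    Computable.partrec_partialInv Primrec.halfLengthCode.to_comp hinj, ?_, fun x => ?_⟩
  · intro p hp q hq h
    obtain ⟨x, hx⟩ := (PFun.mem_dom _ p).1 hp
    obtain ⟨y, hy⟩ := (PFun.mem_dom _ q).1 hq
    rw [← (hmem x _).1 hx, ← (hmem y _).1 hy] at h ⊢
    rw [eq_of_halfLengthCode_prefix h]
  · refine (cpx_le_length ((hmem x _).2 rfl)).trans ?_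
    rw [length_halfLengthCode]
    exact_mod_cast (by omega)

/-- Density lemma -/
theorem stmt10 (k : ℕ) (X : Set (List Bool)) (hX : ∀ x ∈ X, x.length = k)
    (hXbig : 2 ^ k ≤ 3 * X.ncard)
    (A : Set (List Bool))
    (hrep : ∀ N : ℕ, ∃ n : ℕ, N ≤ n ∧ k ≤ n ∧
      ∀ m : ℕ, n ≤ m → m ≤ 2 * n → RepresentsAt A X m)
    (D : List Bool →. List Bool) (hD : OptimalPrefix D) (hdom : D.Dom ⊆ A) :
    ∃ p ∈ D.Dom, (∃ x ∈ X, x <+: p) ∨ (∃ x ∈ X, p <+: x) := by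
  obtain ⟨V, hVrec, hVpf, hV⟩ := exists_prefixFree_decompressor_cpx_le
  obtain ⟨c, hc⟩ := hD.2.2 V hVrec hVpf
  obtain ⟨n, hcn, hkn, hrepn⟩ := hrep (2 * c + 10)
  have hT : 2 ^ (n - 1) <
      {l : List Bool | l.length = n + 1 ∧ ∃ x ∈ X, x <+: l}.ncard := by
    rw [ncard_setOf_length_eq_and_exists_prefix hX (by omega)]
    have h4 : 2 ^ (n + 1) = 4 * 2 ^ (n - 1) := by
      rw [show n + 1 = n - 1 + 2 by omega, pow_add]; ring
    have hsplit : 2 ^ (n + 1) = 2 ^ k * 2 ^ (n + 1 - k) := by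
      rw [← pow_add, Nat.add_sub_cancel' (by omega)]
    have := Nat.mul_le_mul_right (2 ^ (n + 1 - k)) hXbig
    have : 0 < 2 ^ (n - 1) := Nat.two_pow_pos _
    nlinarith
  obtain ⟨u, ⟨hu, -⟩, hu_long⟩ := exists_forall_length_lt_of_two_pow_lt_ncard hD.2.1 hT
  obtain ⟨y, hy, hy_short⟩ := exists_mem_length_le_of_cpx_le (n := 2 * n) <| calc
    Cpx D u ≤ ↑(u.length + u.length / 2 + 3) + c := (hc u).trans (by gcongr; exact hV u)
    _ ≤ ↑(2 * n) := by exact_mod_cast (by omega)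
  have hyD : y ∈ D.Dom := (PFun.mem_dom D y).2 ⟨u, hy⟩
  have hrep_y := hrepn y.length (by have := hu_long y hy; omega) hy_short
  exact ⟨y, hyD, Or.inl (hrep_y.exists_prefix (hdom hyD) rfl)⟩
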